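/- The number of compositions of n with c_{2i-1} > t·c_{2i} for every valid i (i.e., a_{1,t}(n)) equals the number of compositions of n into parts congruent to 1 modulo t+1, and satisfies a_{1,t}(n) = a_{1,t}(n−1) + a_{1,t}(n−t−1) for n > t+1. -/

import Mathlib

/-!
An Arndt composition is a sequence of pairs `(a, b)` with `a > t * b`, possibly followed by a
single last part `c`. Writing `a = t * b + 1 + k`, send the pair to `k` ones followed by the part
`(t + 1) * b + 1`, and the last part to `c` ones. This is a bijection onto the compositions into
parts `≡ 1 [MOD t + 1]`: reading such a composition from the left, every part `> 1` closes a pair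
together with the run of ones in front of it, and the trailing run of ones is the last part.
For the latter compositions the recurrence is immediate: the first part is either `1`, or it
exceeds `t + 1` and lowering it by `t + 1` leaves a part `≡ 1 [MOD t + 1]`.
-/

/-- `l` is a composition of `n`: a list of positive integers summing to `n`. -/
def IsComposition (n : ℕ) (l : List ℕ) : Prop := (∀ x ∈ l, 0 < x) ∧ l.sum = n

/-- The scaled Arndt condition: `s * c_{2i-1} > t * c_{2i}` for each pair
(0-indexed: `s * l[2i] > t * l[2i+1]`). -/
def ArndtCond (s t : ℕ) (l : List ℕ) : Prop :=
  ∀ i : ℕ, 2 * i + 1 < l.length → t * l[2 * i + 1]! < s * l[2 * i]!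

/-- `a_{s,t}(n)`: the number of scaled Arndt compositions of `n`. -/
noncomputable def arndtCount (s t n : ℕ) : ℕ :=
  Nat.card {l : List ℕ // IsComposition n l ∧ ArndtCond s t l}

/-- Number of compositions of `n` with all parts in the set `A`. -/
noncomputable def compCount (A : Set ℕ) (n : ℕ) : ℕ :=
  Nat.card {l : List ℕ // IsComposition n l ∧ ∀ x ∈ l, x ∈ A}

theorem isComposition_nil {n : ℕ} : IsComposition n [] ↔ n = 0 := by
  simp [IsComposition, eq_comm]

theorem isComposition_cons {n a : ℕ} {l : List ℕ} :
    IsComposition n (a :: l) ↔ 0 < a ∧ a ≤ n ∧ IsComposition (n - a) l := by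
  simp only [IsComposition, List.mem_cons, forall_eq_or_imp, List.sum_cons]
  constructor
  · rintro ⟨⟨ha, hl⟩, hsum⟩
    exact ⟨ha, by omega, hl, by omega⟩
  · rintro ⟨ha, han, hl, hsum⟩
    exact ⟨⟨ha, hl⟩, by omega⟩

theorem finite_setOf_isComposition (n : ℕ) : {l : List ℕ | IsComposition n l}.Finite :=
  (Set.finite_range (Composition.blocks (n := n))).subset fun l ⟨hpos, hsum⟩ =>
    ⟨⟨l, hpos _, hsum⟩, rfl⟩

@[simp]
theorem arndtCond_nil (s t : ℕ) : ArndtCond s t [] := by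
  simp [ArndtCond]

@[simp]
theorem arndtCond_singleton (s t a : ℕ) : ArndtCond s t [a] := by
  simp [ArndtCond]

@[simp]
theorem arndtCond_cons_cons {s t a b : ℕ} {l : List ℕ} :
    ArndtCond s t (a :: b :: l) ↔ t * b < s * a ∧ ArndtCond s t l := by
  refine ⟨fun h => ⟨by simpa using h 0 (by simp), fun i hi => ?_⟩, fun ⟨hab, hl⟩ i hi => ?_⟩
  · simpa [Nat.mul_succ] using h (i + 1) (by simp; omega)
  · cases i with
    | zero => simpa using hab
    | succ i => simpa [Nat.mul_succ] using hl i (by simp [Nat.mul_succ] at hi; omega)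

def arndtEncode (t : ℕ) : List ℕ → List ℕ
  | [] => []
  | [c] => List.replicate c 1
  | a :: b :: l => List.replicate (a - (t * b + 1)) 1 ++ ((t + 1) * b + 1) :: arndtEncode t l

/-- `k` is the number of ones read since the last part `> 1`. -/
def arndtDecode (t : ℕ) : ℕ → List ℕ → List ℕ
  | k, [] => if k = 0 then [] else [k]
  | k, x :: l => if x = 1 then arndtDecode t (k + 1) l
      else (k + t * (x / (t + 1)) + 1) :: x / (t + 1) :: arndtDecode t 0 l

theorem exists_eq_of_mem_arndtEncode {t x : ℕ} {l : List ℕ} (hx : x ∈ arndtEncode t l) :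
    ∃ b, x = (t + 1) * b + 1 := by
  induction l using arndtEncode.induct with
  | case1 => simp [arndtEncode] at hx
  | case2 c => exact ⟨0, by simp_all [arndtEncode, List.mem_replicate]⟩
  | case3 a b l ih =>
    simp only [arndtEncode, List.mem_append, List.mem_replicate, List.mem_cons] at hx
    rcases hx with ⟨-, rfl⟩ | rfl | hx
    · exact ⟨0, by simp⟩
    · exact ⟨b, rfl⟩
    · exact ih hx

theorem sum_arndtEncode {t : ℕ} {l : List ℕ} (hl : ArndtCond 1 t l) :
    (arndtEncode t l).sum = l.sum := by
  induction l using arndtEncode.induct with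
  | case1 => rfl
  | case2 c => simp [arndtEncode, List.sum_replicate]
  | case3 a b l ih =>
    rw [arndtCond_cons_cons, one_mul] at hl
    simp only [arndtEncode, List.sum_append, List.sum_replicate, List.sum_cons, smul_eq_mul,
      mul_one, ih hl.2, add_one_mul]
    omega

theorem arndtDecode_replicate_append (t k m : ℕ) (l : List ℕ) :
    arndtDecode t k (List.replicate m 1 ++ l) = arndtDecode t (k + m) l := by
  induction m generalizing k with
  | zero => rfl
  | succ m ih => simp [List.replicate_succ, arndtDecode, ih, add_assoc, add_comm 1]

theorem arndtDecode_arndtEncode {t : ℕ} (ht : 0 < t) {l : List ℕ} (hpos : ∀ x ∈ l, 0 < x)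
    (hl : ArndtCond 1 t l) : arndtDecode t 0 (arndtEncode t l) = l := by
  induction l using arndtEncode.induct with
  | case1 => rfl
  | case2 c =>
    have hc : c ≠ 0 := (hpos c (by simp)).ne'
    simpa [arndtEncode, arndtDecode, hc] using arndtDecode_replicate_append t 0 c []
  | case3 a b l ih =>
    rw [arndtCond_cons_cons, one_mul] at hl
    have hb : 0 < b := hpos b (by simp)
    have hdiv : ((t + 1) * b + 1) / (t + 1) = b := by
      rw [Nat.mul_add_div (by omega), Nat.div_eq_of_lt (by omega), add_zero]
    rw [arndtEncode, arndtDecode_replicate_append, arndtDecode, if_neg (by simp [hb.ne']), hdiv,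
      ih (fun x hx => hpos x (by simp [hx])) hl.2]
    congr 1
    omega

theorem arndtEncode_arndtDecode {t : ℕ} (k : ℕ) {l : List ℕ} (hl : ∀ x ∈ l, x % (t + 1) = 1) :
    arndtEncode t (arndtDecode t k l) = List.replicate k 1 ++ l := by
  induction l generalizing k with
  | nil => by_cases hk : k = 0 <;> simp [arndtDecode, arndtEncode, hk]
  | cons x l ih =>
    simp only [List.mem_cons, forall_eq_or_imp] at hl
    by_cases hx : x = 1
    · simp [arndtDecode, hx, ih _ hl.2, List.replicate_succ']
    · have hdiv := Nat.div_add_mod x (t + 1)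
      rw [hl.1] at hdiv
      rw [arndtDecode, if_neg hx, arndtEncode, ih 0 hl.2, hdiv]
      simp

theorem arndtCond_arndtDecode (t k : ℕ) (l : List ℕ) : ArndtCond 1 t (arndtDecode t k l) := by
  induction l generalizing k with
  | nil => by_cases hk : k = 0 <;> simp [arndtDecode, hk]
  | cons x l ih =>
    by_cases hx : x = 1
    · simpa [arndtDecode, hx] using ih (k + 1)
    · simp only [arndtDecode, if_neg hx, arndtCond_cons_cons]
      exact ⟨by omega, ih 0⟩

theorem isComposition_arndtDecode {t n : ℕ} (k : ℕ) {l : List ℕ} (hn : IsComposition n l)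
    (hl : ∀ x ∈ l, x % (t + 1) = 1) : IsComposition (k + n) (arndtDecode t k l) := by
  induction l generalizing k n with
  | nil =>
    rw [isComposition_nil.1 hn]
    by_cases hk : k = 0 <;> simp [arndtDecode, hk, IsComposition]; omega
  | cons x l ih =>
    obtain ⟨hx, hxn, hl'⟩ := isComposition_cons.1 hn
    simp only [List.mem_cons, forall_eq_or_imp] at hl
    by_cases h1 : x = 1
    · rw [arndtDecode, if_pos h1]
      convert ih (k + 1) hl' hl.2 using 1
      omega
    · have hdiv := Nat.div_add_mod x (t + 1)
      rw [hl.1, add_one_mul] at hdiv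
      have hb : 0 < x / (t + 1) := Nat.pos_of_ne_zero fun h => h1 (by simp [h] at hdiv; omega)
      have hrest := ih 0 hl' hl.2
      rw [arndtDecode, if_neg h1, isComposition_cons, isComposition_cons]
      refine ⟨by omega, by omega, hb, by omega, ?_⟩
      convert hrest using 1
      omega

theorem mod_eq_one_of_mem_arndtEncode {t x : ℕ} (ht : 0 < t) {l : List ℕ}
    (hx : x ∈ arndtEncode t l) : x % (t + 1) = 1 := by
  obtain ⟨b, rfl⟩ := exists_eq_of_mem_arndtEncode hx
  rw [Nat.mul_add_mod, Nat.mod_eq_of_lt (by omega)]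

theorem isComposition_arndtEncode {t n : ℕ} {l : List ℕ} (hn : IsComposition n l)
    (hl : ArndtCond 1 t l) : IsComposition n (arndtEncode t l) :=
  ⟨fun x hx => by obtain ⟨b, rfl⟩ := exists_eq_of_mem_arndtEncode hx; omega,
    (sum_arndtEncode hl).trans hn.2⟩

theorem arndtCount_one_eq_compCount {t : ℕ} (ht : 0 < t) (n : ℕ) :
    arndtCount 1 t n = compCount {x | x % (t + 1) = 1} n :=
  Nat.card_congr
    { toFun := fun l => ⟨arndtEncode t l.1, isComposition_arndtEncode l.2.1 l.2.2,
        fun _ => mod_eq_one_of_mem_arndtEncode ht⟩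
      invFun := fun l => ⟨arndtDecode t 0 l.1,
        by simpa using isComposition_arndtDecode 0 l.2.1 l.2.2, arndtCond_arndtDecode t 0 l.1⟩
      left_inv := fun l => Subtype.ext (arndtDecode_arndtEncode ht l.2.1.1 l.2.2)
      right_inv := fun l => Subtype.ext (by simpa using arndtEncode_arndtDecode 0 l.2.2) }

theorem mod_eq_one_iff {d x : ℕ} (hd : 2 ≤ d) :
    x % d = 1 ↔ x = 1 ∨ d < x ∧ (x - d) % d = 1 := by
  rcases lt_or_ge x d with hx | hx
  · rw [Nat.mod_eq_of_lt hx]; omega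
  · rw [Nat.mod_eq_sub_mod hx]
    rcases hx.eq_or_lt with rfl | hx
    · simp; omega
    · omega

theorem compCount_eq_ncard (A : Set ℕ) (n : ℕ) :
    compCount A n = {l : List ℕ | IsComposition n l ∧ ∀ x ∈ l, x ∈ A}.ncard :=
  Nat.card_coe_set_eq _

theorem setOf_mod_eq_one_eq_union {d n : ℕ} (hd : 2 ≤ d) (hn : d < n) :
    {l : List ℕ | IsComposition n l ∧ ∀ x ∈ l, x % d = 1} =
      List.cons 1 '' {l | IsComposition (n - 1) l ∧ ∀ x ∈ l, x % d = 1} ∪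
        List.modifyHead (· + d) '' {l | IsComposition (n - d) l ∧ ∀ x ∈ l, x % d = 1} := by
  ext l
  simp only [Set.mem_union, Set.mem_image, Set.mem_ofPred_eq]
  constructor
  · rintro ⟨hl, hmod⟩
    rcases l with _ | ⟨a, l⟩
    · have := isComposition_nil.1 hl; omega
    obtain ⟨ha, han, hl⟩ := isComposition_cons.1 hl
    simp only [List.mem_cons, forall_eq_or_imp] at hmod
    rcases (mod_eq_one_iff hd).1 hmod.1 with rfl | ⟨had, hmod'⟩
    · exact .inl ⟨l, ⟨hl, hmod.2⟩, rfl⟩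
    · refine .inr ⟨(a - d) :: l, ⟨isComposition_cons.2 ⟨by omega, by omega, ?_⟩, ?_⟩, ?_⟩
      · rwa [show n - d - (a - d) = n - a by omega]
      · simpa [hmod'] using hmod.2
      · simp only [List.modifyHead_cons]; congr 1; omega
  · rintro (⟨l, ⟨hl, hmod⟩, rfl⟩ | ⟨l, ⟨hl, hmod⟩, rfl⟩)
    · refine ⟨isComposition_cons.2 ⟨one_pos, by omega, hl⟩, ?_⟩
      simp only [List.mem_cons, forall_eq_or_imp]
      exact ⟨Nat.mod_eq_of_lt (by omega), hmod⟩
    · rcases l with _ | ⟨a, l⟩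
      · have := isComposition_nil.1 hl; omega
      obtain ⟨ha, han, hl⟩ := isComposition_cons.1 hl
      simp only [List.modifyHead_cons, List.mem_cons, forall_eq_or_imp] at hmod ⊢
      refine ⟨isComposition_cons.2 ⟨by omega, by omega, ?_⟩, ?_⟩
      · rwa [show n - (a + d) = n - d - a by omega]
      · simpa using hmod

theorem compCount_setOf_mod_eq_one_eq_add {d n : ℕ} (hd : 2 ≤ d) (hn : d < n) :
    compCount {x | x % d = 1} n =
      compCount {x | x % d = 1} (n - 1) + compCount {x | x % d = 1} (n - d) := by
  have hinj : (List.modifyHead (· + d)).Injective := by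
    rintro (_ | ⟨a, l⟩) (_ | ⟨b, m⟩) h <;> simp_all
  have hdisj : Disjoint (Set.range (List.cons 1)) (Set.range (List.modifyHead (· + d))) := by
    rw [Set.disjoint_left]
    rintro _ ⟨l, rfl⟩ ⟨_ | ⟨a, m⟩, h⟩ <;> simp at h; omega
  simp only [compCount_eq_ncard, Set.mem_ofPred_eq]
  rw [setOf_mod_eq_one_eq_union hd hn, Set.ncard_union_eq
      (hdisj.mono (Set.image_subset_range _ _) (Set.image_subset_range _ _))
      (((finite_setOf_isComposition _).subset fun _ h => h.1).image _)
      (((finite_setOf_isComposition _).subset fun _ h => h.1).image _),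
    Set.ncard_image_of_injective _ List.cons_injective, Set.ncard_image_of_injective _ hinj]

theorem arndt_1_t (t : ℕ) (ht : 0 < t) :
    (∀ n : ℕ, arndtCount 1 t n = compCount {x : ℕ | x % (t + 1) = 1} n) ∧
    (∀ n : ℕ, t + 1 < n →
      arndtCount 1 t n = arndtCount 1 t (n - 1) + arndtCount 1 t (n - (t + 1))) := by
  refine ⟨arndtCount_one_eq_compCount ht, fun n hn => ?_⟩
  simp only [arndtCount_one_eq_compCount ht]
  exact compCount_setOf_mod_eq_one_eq_add (by omega) hn
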